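/- Let h(s) = [Γ(s)]² Γ((1-s)/α₁) Γ((1-s)/α₂) sin(p₁(1-s)π) sin(q₁(1-s)π) x^{-s} with x > 0, p₁, q₁ ∈ (0,1), and α₁, α₂ > 0. Then for every positive integer k, h has a pole of order at most 2 at s = -k, and the residue of h at s = -k equals (x^k/(k!)²) Γ((k+1)/α₁) Γ((k+1)/α₂) sin(p₁(1+k)π) sin(q₁(1+k)π) { 2ψ(k+1) − (1/α₁)ψ((k+1)/α₁) − (1/α₂)ψ((k+1)/α₂) − log x } − (π/2)(x^k/(k!)²) Γ((k+1)/α₁) Γ((k+1)/α₂) { (p₁+q₁) sin((p₁+q₁)(1+k)π) − (p₁−q₁) sin((p₁−q₁)(1+k)π) }. -/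

import Mathlib

open Real Filter

/-- The digamma function `ψ = Γ'/Γ`. -/
noncomputable def digamma (t : ℝ) : ℝ := deriv Real.Gamma t / Real.Gamma t

/-- The integrand of the Mellin–Barnes integral:
`h(s) = Γ(s)² Γ((1-s)/α₁) Γ((1-s)/α₂) sin(p₁(1-s)π) sin(q₁(1-s)π) x^{-s}`. -/
noncomputable def mbIntegrand (α₁ α₂ p₁ q₁ x : ℝ) (s : ℂ) : ℂ :=
  (Complex.Gamma s) ^ 2 * Complex.Gamma ((1 - s) / (α₁ : ℂ)) *
    Complex.Gamma ((1 - s) / (α₂ : ℂ)) *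
    Complex.sin ((p₁ : ℂ) * (1 - s) * (π : ℂ)) *
    Complex.sin ((q₁ : ℂ) * (1 - s) * (π : ℂ)) * (x : ℂ) ^ (-s)

/-! Near `s = -k` the only singular factor of `h` is `Γ(s)²`, and
`(s + k) Γ(s) = Γ(s + k + 1) / ∏_{j<k} (s + j)` extends holomorphically to `s = -k`, with value
`(-1)^k / k!` and logarithmic derivative `ψ(1) + H_k = ψ(k + 1)` there. So `(s + k)² h(s)` agrees
off `-k` with a function `F` holomorphic at `-k`; the two limits are `F(-k)` and `F'(-k)`, and the
product rule gives `F'(-k)`, the two sine factors combining through `sin (a ± b)`. -/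

open Topology

lemma Complex.ne_neg_natCast_of_re_pos {s : ℂ} (hs : 0 < s.re) (m : ℕ) : s ≠ -m := by
  rintro rfl
  simp at hs
  linarith [Nat.cast_nonneg (α := ℝ) m]

lemma Complex.analyticAt_Gamma_of_re_pos {s : ℂ} (hs : 0 < s.re) : AnalyticAt ℂ Complex.Gamma s :=
  DifferentiableOn.analyticAt
    (fun z hz => (Complex.differentiableAt_Gamma z
      (Complex.ne_neg_natCast_of_re_pos hz)).differentiableWithinAt)
    ((isOpen_lt continuous_const Complex.continuous_re).mem_nhds hs)

lemma Real.hasDerivAt_Gamma_of_pos {r : ℝ} (hr : 0 < r) :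
    HasDerivAt Real.Gamma (Real.Gamma r * digamma r) r := by
  rw [digamma, mul_div_cancel₀ _ (Real.Gamma_pos_of_pos hr).ne']
  refine (Real.differentiableAt_Gamma fun m => ?_).hasDerivAt
  linarith [Nat.cast_nonneg (α := ℝ) m]

lemma digamma_nat_add_one (n : ℕ) :
    digamma (n + 1) = -eulerMascheroniConstant + harmonic n := by
  rw [digamma, (Real.hasDerivAt_Gamma_nat n).deriv, Real.Gamma_nat_eq_factorial]
  field_simp

lemma HasDerivAt.complex_of_real {f : ℂ → ℂ} {g : ℝ → ℝ} {g' t : ℝ}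
    (hf : DifferentiableAt ℂ f t) (hg : HasDerivAt g g' t) (hfg : ∀ s : ℝ, f s = g s) :
    HasDerivAt f g' t := by
  have hreal := hf.hasDerivAt.comp_ofReal
  simp only [hfg] at hreal
  exact hreal.unique hg.ofReal_comp ▸ hf.hasDerivAt

lemma Complex.Gamma_add_nat_eq_prod_mul (s : ℂ) (n : ℕ) (hs : ∀ j < n, s + j ≠ 0) :
    Complex.Gamma (s + n) = (∏ j ∈ Finset.range n, (s + j)) * Complex.Gamma s := by
  induction n with
  | zero => simp
  | succ n ih =>
    rw [Nat.cast_succ, ← add_assoc, Complex.Gamma_add_one _ (hs n n.lt_succ_self),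
      ih fun j hj => hs j (hj.trans n.lt_succ_self), Finset.prod_range_succ]
    ring

lemma neg_natCast_add_natCast_reflect {n j : ℕ} (hj : j < n) :
    -(n : ℂ) + ↑(n - 1 - j) = -(j + 1) := by
  rw [Nat.cast_sub (by omega), Nat.cast_sub (by omega)]
  push_cast
  ring

lemma prod_range_neg_natCast_add (n : ℕ) :
    ∏ j ∈ Finset.range n, (-(n : ℂ) + j) = (-1) ^ n * n.factorial := by
  rw [← Finset.prod_range_reflect, Finset.prod_congr rfl fun j hj =>
    neg_natCast_add_natCast_reflect (Finset.mem_range.1 hj), Finset.prod_neg,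
    Finset.card_range, ← Finset.prod_range_add_one_eq_factorial]
  push_cast
  rfl

lemma prod_range_neg_natCast_add_ne_zero (n : ℕ) :
    ∏ j ∈ Finset.range n, (-(n : ℂ) + j) ≠ 0 := by
  rw [prod_range_neg_natCast_add]
  exact mul_ne_zero (pow_ne_zero _ (by norm_num)) (Nat.cast_ne_zero.2 n.factorial_ne_zero)

lemma sum_range_inv_neg_natCast_add (n : ℕ) :
    ∑ j ∈ Finset.range n, (-(n : ℂ) + j)⁻¹ = -harmonic n := by
  rw [← Finset.sum_range_reflect, Finset.sum_congr rfl fun j hj => by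
    rw [neg_natCast_add_natCast_reflect (Finset.mem_range.1 hj), inv_neg]]
  simp [harmonic, Finset.sum_neg_distrib]

/-- `(s + n) Γ(s)`, in a form that is holomorphic at `s = -n`. -/
noncomputable def gammaPoleRemoved (n : ℕ) (s : ℂ) : ℂ :=
  Complex.Gamma (s + (n + 1)) / ∏ j ∈ Finset.range n, (s + j)

lemma eventually_gammaPoleRemoved_eq (n : ℕ) :
    ∀ᶠ s : ℂ in 𝓝[≠] (-(n : ℂ)), gammaPoleRemoved n s = (s + n) * Complex.Gamma s := by
  have hP : ∀ᶠ s : ℂ in 𝓝 (-(n : ℂ)), ∏ j ∈ Finset.range n, (s + j) ≠ 0 :=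
    (by fun_prop : Continuous fun s : ℂ => ∏ j ∈ Finset.range n, (s + j)).continuousAt
      |>.eventually_ne (prod_range_neg_natCast_add_ne_zero n)
  filter_upwards [nhdsWithin_le_nhds hP, self_mem_nhdsWithin] with s hPs hs
  have hs' : s + n ≠ 0 := fun h => hs (eq_neg_of_add_eq_zero_left h)
  have hshift := Complex.Gamma_add_nat_eq_prod_mul s (n + 1) fun j hj => by
    rcases Nat.lt_succ_iff_lt_or_eq.1 hj with hj | rfl
    · exact Finset.prod_ne_zero_iff.1 hPs j (Finset.mem_range.2 hj)
    · exact hs'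
  rw [gammaPoleRemoved, div_eq_iff hPs, ← Nat.cast_add_one, hshift, Finset.prod_range_succ]
  ring

lemma gammaPoleRemoved_neg_natCast (n : ℕ) :
    gammaPoleRemoved n (-(n : ℂ)) = ((-1) ^ n * n.factorial : ℂ)⁻¹ := by
  rw [gammaPoleRemoved, prod_range_neg_natCast_add, neg_add_cancel_left, Complex.Gamma_one,
    one_div]

lemma analyticAt_gammaPoleRemoved (n : ℕ) : AnalyticAt ℂ (gammaPoleRemoved n) (-(n : ℂ)) := by
  have hΓ : AnalyticAt ℂ (fun s : ℂ => Complex.Gamma (s + (n + 1))) (-n) :=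
    (Complex.analyticAt_Gamma_of_re_pos (by simp)).comp (by fun_prop)
  exact hΓ.div (by fun_prop) (prod_range_neg_natCast_add_ne_zero n)

lemma logDeriv_gammaPoleRemoved_neg_natCast (n : ℕ) :
    logDeriv (gammaPoleRemoved n) (-(n : ℂ)) = digamma (n + 1) := by
  have hΓ : HasDerivAt (fun s : ℂ => Complex.Gamma (s + (n + 1)))
      (-eulerMascheroniConstant) (-(n : ℂ)) := by
    have h := Complex.hasDerivAt_Gamma_one
    rw [show (1 : ℂ) = -n + (n + 1) by ring] at h
    exact h.comp_add_const _ _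
  have hP : logDeriv (fun s : ℂ => ∏ j ∈ Finset.range n, (s + j)) (-(n : ℂ)) = -harmonic n := by
    rw [logDeriv_prod (Finset.prod_ne_zero_iff.1 (prod_range_neg_natCast_add_ne_zero n))
      (fun j _ => by fun_prop), ← sum_range_inv_neg_natCast_add]
    simp [logDeriv_apply]
  have hΓ1 : Complex.Gamma (-(n : ℂ) + (n + 1)) = 1 := by
    rw [neg_add_cancel_left, Complex.Gamma_one]
  unfold gammaPoleRemoved
  rw [logDeriv_div (-(n : ℂ)) (by simp) (prod_range_neg_natCast_add_ne_zero n)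
    hΓ.differentiableAt (by fun_prop), hP, logDeriv_apply, hΓ.deriv, hΓ1, digamma_nat_add_one]
  push_cast
  ring

lemma hasDerivAt_gammaPoleRemoved (n : ℕ) :
    HasDerivAt (gammaPoleRemoved n) (gammaPoleRemoved n (-(n : ℂ)) * digamma (n + 1))
      (-(n : ℂ)) := by
  have hne : gammaPoleRemoved n (-(n : ℂ)) ≠ 0 := by
    rw [gammaPoleRemoved_neg_natCast, ← prod_range_neg_natCast_add]
    exact inv_ne_zero (prod_range_neg_natCast_add_ne_zero n)
  rw [← logDeriv_gammaPoleRemoved_neg_natCast, logDeriv_apply, mul_div_cancel₀ _ hne]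
  exact (analyticAt_gammaPoleRemoved n).differentiableAt.hasDerivAt

noncomputable def mbCofactor (α₁ α₂ p₁ q₁ x : ℝ) (s : ℂ) : ℂ :=
  Complex.Gamma ((1 - s) / α₁) * Complex.Gamma ((1 - s) / α₂) *
    Complex.sin (p₁ * (1 - s) * π) * Complex.sin (q₁ * (1 - s) * π) * (x : ℂ) ^ (-s)

lemma mbIntegrand_eq_Gamma_sq_mul_mbCofactor (α₁ α₂ p₁ q₁ x : ℝ) (s : ℂ) :
    mbIntegrand α₁ α₂ p₁ q₁ x s = Complex.Gamma s ^ 2 * mbCofactor α₁ α₂ p₁ q₁ x s := by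
  simp only [mbIntegrand, mbCofactor]
  ring

section mbCofactor

variable {α₁ α₂ x : ℝ} (p₁ q₁ : ℝ)

lemma analyticAt_mbCofactor (hα₁ : 0 < α₁) (hα₂ : 0 < α₂) (hx : 0 < x) {s : ℂ}
    (hs : s.re < 1) :
    AnalyticAt ℂ (mbCofactor α₁ α₂ p₁ q₁ x) s := by
  have hΓ : ∀ {α : ℝ}, 0 < α → AnalyticAt ℂ (fun s : ℂ => Complex.Gamma ((1 - s) / α)) s :=
    fun {α} hα => (Complex.analyticAt_Gamma_of_re_pos (by
      rw [Complex.div_ofReal_re, Complex.sub_re, Complex.one_re]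
      exact div_pos (by linarith) hα)).comp (by fun_prop)
  have hx' : (x : ℂ) ∈ Complex.slitPlane := Complex.ofReal_mem_slitPlane.2 hx
  unfold mbCofactor
  exact (((hΓ hα₁).mul (hΓ hα₂)).mul (by fun_prop)).mul (by fun_prop) |>.mul (by fun_prop)

lemma mbCofactor_ofReal (hx : 0 ≤ x) (t : ℝ) :
    mbCofactor α₁ α₂ p₁ q₁ x t = ↑(Real.Gamma ((1 - t) / α₁) * Real.Gamma ((1 - t) / α₂) *
      Real.sin (p₁ * (1 - t) * π) * Real.sin (q₁ * (1 - t) * π) * x ^ (-t)) := by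
  simp only [mbCofactor, Complex.ofReal_mul, Complex.ofReal_cpow hx, ← Complex.Gamma_ofReal,
    Complex.ofReal_sin]
  push_cast
  rfl

lemma hasDerivAt_mbCofactor (hα₁ : 0 < α₁) (hα₂ : 0 < α₂) (hx : 0 < x) {t : ℝ} (ht : t < 1) :
    HasDerivAt (mbCofactor α₁ α₂ p₁ q₁ x)
      ↑(x ^ (-t) * Real.Gamma ((1 - t) / α₁) * Real.Gamma ((1 - t) / α₂) *
        (Real.sin (p₁ * (1 - t) * π) * Real.sin (q₁ * (1 - t) * π) *
            (-(digamma ((1 - t) / α₁) / α₁) - digamma ((1 - t) / α₂) / α₂ - Real.log x) -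
          π * (p₁ * Real.cos (p₁ * (1 - t) * π) * Real.sin (q₁ * (1 - t) * π) +
            q₁ * Real.sin (p₁ * (1 - t) * π) * Real.cos (q₁ * (1 - t) * π)))) t := by
  have hΓ : ∀ {α : ℝ}, 0 < α → HasDerivAt (fun t : ℝ => Real.Gamma ((1 - t) / α))
      (Real.Gamma ((1 - t) / α) * digamma ((1 - t) / α) * (-1 / α)) t :=
    fun {α} hα => HasDerivAt.comp (h := fun t : ℝ => (1 - t) / α) t
      (Real.hasDerivAt_Gamma_of_pos (div_pos (by linarith) hα))
      (((hasDerivAt_id' t).const_sub 1).div_const α)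
  have hsin : ∀ c : ℝ, HasDerivAt (fun t : ℝ => Real.sin (c * (1 - t) * π))
      (Real.cos (c * (1 - t) * π) * (c * -1 * π)) t :=
    fun c => (((hasDerivAt_id' t).const_sub 1).const_mul c |>.mul_const π).sin
  have hpow : HasDerivAt (fun t : ℝ => x ^ (-t)) (Real.log x * -1 * x ^ (-t)) t :=
    (hasDerivAt_id' t).neg.const_rpow hx
  have hd := (analyticAt_mbCofactor p₁ q₁ hα₁ hα₂ hx (s := t) (by simpa)).differentiableAt
  have hprod := (((hΓ hα₁).mul (hΓ hα₂)).mul (hsin p₁)).mul (hsin q₁) |>.mul hpow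
  refine (HasDerivAt.complex_of_real hd hprod (mbCofactor_ofReal p₁ q₁ hx.le)).congr_deriv ?_
  simp only [Pi.mul_apply]
  congr 1
  ring

end mbCofactor

lemma hasDerivAt_gammaPoleRemoved_sq_mul (n : ℕ) {f : ℂ → ℂ} {f' : ℂ}
    (hf : HasDerivAt f f' (-(n : ℂ))) :
    HasDerivAt (fun s => gammaPoleRemoved n s ^ 2 * f s)
      (((n.factorial : ℂ) ^ 2)⁻¹ * (2 * digamma (n + 1) * f (-n) + f')) (-(n : ℂ)) := by
  have hsq : gammaPoleRemoved n (-(n : ℂ)) ^ 2 = ((n.factorial : ℂ) ^ 2)⁻¹ := by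
    rw [gammaPoleRemoved_neg_natCast, inv_pow, mul_pow, ← pow_mul', (even_two_mul n).neg_one_pow,
      one_mul]
  refine (((hasDerivAt_gammaPoleRemoved n).pow 2).mul hf).congr_deriv ?_
  rw [← hsq, Pi.pow_apply]
  ring

theorem mbIntegrand_residue_at_neg_int_general (α₁ α₂ p₁ q₁ x : ℝ) (hx : 0 < x)
    (hα₁ : 0 < α₁) (hα₂ : 0 < α₂) (k : ℕ) :
    (∃ L : ℂ, Tendsto (fun z : ℂ => (z + (k : ℂ)) ^ 2 * mbIntegrand α₁ α₂ p₁ q₁ x z)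
        (nhdsWithin (-(k : ℂ)) {(-(k : ℂ))}ᶜ) (nhds L)) ∧
    Tendsto (fun s : ℂ =>
        deriv (fun z : ℂ => (z + (k : ℂ)) ^ 2 * mbIntegrand α₁ α₂ p₁ q₁ x z) s)
      (nhdsWithin (-(k : ℂ)) {(-(k : ℂ))}ᶜ)
      (nhds (((x ^ k / ((k.factorial : ℝ)) ^ 2) *
          Real.Gamma ((k + 1) / α₁) * Real.Gamma ((k + 1) / α₂) *
          Real.sin (p₁ * (1 + k) * π) * Real.sin (q₁ * (1 + k) * π) *
          (2 * digamma (k + 1) - (1 / α₁) * digamma ((k + 1) / α₁) -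
            (1 / α₂) * digamma ((k + 1) / α₂) - Real.log x) -
        (π / 2) * (x ^ k / ((k.factorial : ℝ)) ^ 2) *
          Real.Gamma ((k + 1) / α₁) * Real.Gamma ((k + 1) / α₂) *
          ((p₁ + q₁) * Real.sin ((p₁ + q₁) * (1 + k) * π) -
            (p₁ - q₁) * Real.sin ((p₁ - q₁) * (1 + k) * π)) : ℝ) : ℂ)) := by
  set F : ℂ → ℂ := fun s => gammaPoleRemoved k s ^ 2 * mbCofactor α₁ α₂ p₁ q₁ x s
  have hk : -(k : ℝ) < 1 := by linarith [Nat.cast_nonneg (α := ℝ) k]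
  have hcast : ((-(k : ℝ) : ℝ) : ℂ) = -(k : ℂ) := by push_cast; rfl
  have hG := hasDerivAt_mbCofactor p₁ q₁ hα₁ hα₂ hx hk
  rw [hcast] at hG
  have hF := hasDerivAt_gammaPoleRemoved_sq_mul k hG
  have hFan : AnalyticAt ℂ F (-(k : ℂ)) := ((analyticAt_gammaPoleRemoved k).pow 2).mul
    (analyticAt_mbCofactor p₁ q₁ hα₁ hα₂ hx (by simpa using hk))
  have heq : (fun z : ℂ => (z + k) ^ 2 * mbIntegrand α₁ α₂ p₁ q₁ x z) =ᶠ[𝓝[≠] (-(k : ℂ))] F := by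
    filter_upwards [eventually_gammaPoleRemoved_eq k] with z hz
    simp only [F, hz, mbIntegrand_eq_Gamma_sq_mul_mbCofactor]
    ring
  refine ⟨⟨F (-k), (hFan.continuousAt.tendsto.mono_left nhdsWithin_le_nhds).congr' heq.symm⟩, ?_⟩
  convert (hFan.deriv.continuousAt.tendsto.mono_left nhdsWithin_le_nhds).congr'
    heq.nhdsNE_deriv.symm using 2
  rw [hF.deriv, ← hcast, mbCofactor_ofReal p₁ q₁ hx.le,
    show (p₁ + q₁) * (1 + k) * π = p₁ * (1 + k) * π + q₁ * (1 + k) * π by ring,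
    show (p₁ - q₁) * (1 + k) * π = p₁ * (1 + k) * π - q₁ * (1 + k) * π by ring,
    Real.sin_add, Real.sin_sub]
  simp only [sub_neg_eq_add, neg_neg, Real.rpow_natCast, add_comm (1 : ℝ) k]
  push_cast
  ring

/-- At each negative integer `s = -k`, `h` has a pole of order at most 2, and its residue
(computed as `lim_{s → -k} d/ds [(s+k)² h(s)]`) has the stated closed form in terms of
Gamma, digamma and sine functions. -/
theorem mbIntegrand_residue_at_neg_int (α₁ α₂ p₁ q₁ x : ℝ) (hx : 0 < x)
    (hp₁ : p₁ ∈ Set.Ioo (0 : ℝ) 1) (hq₁ : q₁ ∈ Set.Ioo (0 : ℝ) 1)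
    (hα₁ : 0 < α₁) (hα₂ : 0 < α₂) (k : ℕ) (hk : 0 < k) :
    (∃ L : ℂ, Tendsto (fun z : ℂ => (z + (k : ℂ)) ^ 2 * mbIntegrand α₁ α₂ p₁ q₁ x z)
        (nhdsWithin (-(k : ℂ)) {(-(k : ℂ))}ᶜ) (nhds L)) ∧
    Tendsto (fun s : ℂ =>
        deriv (fun z : ℂ => (z + (k : ℂ)) ^ 2 * mbIntegrand α₁ α₂ p₁ q₁ x z) s)
      (nhdsWithin (-(k : ℂ)) {(-(k : ℂ))}ᶜ)
      (nhds (((x ^ k / ((k.factorial : ℝ)) ^ 2) *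
          Real.Gamma ((k + 1) / α₁) * Real.Gamma ((k + 1) / α₂) *
          Real.sin (p₁ * (1 + k) * π) * Real.sin (q₁ * (1 + k) * π) *
          (2 * digamma (k + 1) - (1 / α₁) * digamma ((k + 1) / α₁) -
            (1 / α₂) * digamma ((k + 1) / α₂) - Real.log x) -
        (π / 2) * (x ^ k / ((k.factorial : ℝ)) ^ 2) *
          Real.Gamma ((k + 1) / α₁) * Real.Gamma ((k + 1) / α₂) *
          ((p₁ + q₁) * Real.sin ((p₁ + q₁) * (1 + k) * π) -
            (p₁ - q₁) * Real.sin ((p₁ - q₁) * (1 + k) * π)) : ℝ) : ℂ)) :=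
  mbIntegrand_residue_at_neg_int_general α₁ α₂ p₁ q₁ x hx hα₁ hα₂ k
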